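/- arXiv:quant-ph/0406139 — 2 statements merged into one kernel-verified Lean document; each statement's English description precedes it below -/
import Mathlib

section
/- Let ρ be a density matrix on ℂ^{d₁}⊗ℂ^{d₂}, and let γ_{nm} (n,m = 1,2) be real numbers with |γ_{nm}| ≤ 1. For all Hermitian matrices A₁, A₂ on ℂ^{d₁} and B₁, B₂ on ℂ^{d₂} with operator norms at most 1: if γ₁₁γ₁₂ = −γ₂₁γ₂₂ and T is a source-operator of type T₁₂₂ for ρ, then |Σ_{n,m} γ_{nm} tr[ρ(A_n⊗B_m)]| ≤ 2‖T‖₁; and if γ₁₁γ₂₁ = −γ₁₂γ₂₂ and S is a source-operator of type T₁₁₂ for ρ, then |Σ_{n,m} γ_{nm} tr[ρ(A_n⊗B_m)]| ≤ 2‖S‖₁. -/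
/-!
By the two marginal conditions on `T`, every correlation `tr[ρ (A_n ⊗ B_m)]` equals
`tr[T X_nm]`, where `B₁` acts on the second and `B₂` on the third tensor factor. Hence the
CHSH expression is `tr[T X]` with `X = A₁ ⊗ C₁ + A₂ ⊗ C₂` and `C_n = γ_n1 B₁ ⊗ 1 + γ_n2 1 ⊗ B₂`.
The eigenbases of `B₁` and `B₂` diagonalize `C₁` and `C₂` simultaneously, with eigenvalue pairs
`(γ₁₁ w + γ₁₂ z, γ₂₁ w + γ₂₂ z)`, `|w|, |z| ≤ 1`; the condition `γ₁₁ γ₁₂ = -γ₂₁ γ₂₂` bounds the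
sum of their absolute values by `2`, so `|⟨v, X v⟩| ≤ 2 ‖v‖²`. Expanding `T` in its eigenbasis
gives `|tr[T X]| ≤ 2 ∑ |λ_j| = 2 ‖T‖₁`. The case `T₁₁₂` reduces to `T₁₂₂` by exchanging the two
parties.
-/

open Matrix
open scoped Kronecker ComplexOrder

namespace BellPaper

variable {α β γ : Type*} [Fintype α] [Fintype β] [Fintype γ]

/-- Partial trace over the first factor of a threefold tensor product. -/
noncomputable def ptr1 (T : Matrix ((α × β) × γ) ((α × β) × γ) ℂ) :
    Matrix (β × γ) (β × γ) ℂ :=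
  fun p q => ∑ i : α, T ((i, p.1), p.2) ((i, q.1), q.2)

/-- Partial trace over the second factor of a threefold tensor product. -/
noncomputable def ptr2 (T : Matrix ((α × β) × γ) ((α × β) × γ) ℂ) :
    Matrix (α × γ) (α × γ) ℂ :=
  fun p q => ∑ j : β, T ((p.1, j), p.2) ((q.1, j), q.2)

/-- Partial trace over the third factor of a threefold tensor product. -/
noncomputable def ptr3 (T : Matrix ((α × β) × γ) ((α × β) × γ) ℂ) :
    Matrix (α × β) (α × β) ℂ :=
  fun p q => ∑ k : γ, T (p, k) (q, k)

/-- Partial trace over the second factor of a twofold tensor product. -/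
noncomputable def ptrB (M : Matrix (α × β) (α × β) ℂ) : Matrix α α ℂ :=
  fun i i' => ∑ j : β, M (i, j) (i', j)

/-- A density matrix: positive semidefinite with unit trace. -/
def IsDensityMatrix {n : Type*} [Fintype n] (ρ : Matrix n n ℂ) : Prop :=
  ρ.PosSemidef ∧ ρ.trace = 1

/-- Source-operator of type `T₁₂₂` for a state on ℂ^{d₁}⊗ℂ^{d₂}. -/
def IsSource122 {d₁ d₂ : ℕ} (ρ : Matrix (Fin d₁ × Fin d₂) (Fin d₁ × Fin d₂) ℂ)
    (T : Matrix ((Fin d₁ × Fin d₂) × Fin d₂) ((Fin d₁ × Fin d₂) × Fin d₂) ℂ) : Prop :=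
  T.IsHermitian ∧ ptr2 T = ρ ∧ ptr3 T = ρ

/-- Source-operator of type `T₁₁₂` for a state on ℂ^{d₁}⊗ℂ^{d₂}. -/
def IsSource112 {d₁ d₂ : ℕ} (ρ : Matrix (Fin d₁ × Fin d₂) (Fin d₁ × Fin d₂) ℂ)
    (S : Matrix ((Fin d₁ × Fin d₁) × Fin d₂) ((Fin d₁ × Fin d₁) × Fin d₂) ℂ) : Prop :=
  S.IsHermitian ∧ ptr1 S = ρ ∧ ptr2 S = ρ

/-- A DSO state: a density matrix admitting a positive semidefinite source-operator. -/
def IsDSO {d₁ d₂ : ℕ} (ρ : Matrix (Fin d₁ × Fin d₂) (Fin d₁ × Fin d₂) ℂ) : Prop :=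
  IsDensityMatrix ρ ∧
    ((∃ T, T.PosSemidef ∧ IsSource122 ρ T) ∨ (∃ S, S.PosSemidef ∧ IsSource112 ρ S))

/-- A Bell class state: a density matrix admitting a density source-operator with the
special dilation property (all three partial traces equal the state). -/
def IsBellClass {d : ℕ} (ρ : Matrix (Fin d × Fin d) (Fin d × Fin d) ℂ) : Prop :=
  IsDensityMatrix ρ ∧
    ∃ T : Matrix ((Fin d × Fin d) × Fin d) ((Fin d × Fin d) × Fin d) ℂ,
      T.PosSemidef ∧ ptr1 T = ρ ∧ ptr2 T = ρ ∧ ptr3 T = ρ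

/-- The operator (spectral) norm of a matrix acting on a Euclidean space. -/
noncomputable def opNorm {n : Type*} [Fintype n] [DecidableEq n] (W : Matrix n n ℂ) : ℝ :=
  ‖Matrix.toEuclideanCLM (𝕜 := ℂ) W‖

/-- The swap (permutation) operator `V_d` on ℂ^d ⊗ ℂ^d. -/
noncomputable def swapMat (d : ℕ) : Matrix (Fin d × Fin d) (Fin d × Fin d) ℂ :=
  fun p q => if p.1 = q.2 ∧ p.2 = q.1 then 1 else 0

/-- The Werner state on ℂ^d ⊗ ℂ^d. -/
noncomputable def werner (d : ℕ) : Matrix (Fin d × Fin d) (Fin d × Fin d) ℂ :=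
  (((d : ℂ) + 1) / (d : ℂ) ^ 3) • (1 : Matrix (Fin d × Fin d) (Fin d × Fin d) ℂ)
    - ((d : ℂ) ^ 2)⁻¹ • swapMat d

/-- The triple of indices of a point of the threefold product. -/
def triple {d : ℕ} (p : (Fin d × Fin d) × Fin d) : Fin 3 → Fin d := ![p.1.1, p.1.2, p.2]

/-- The unitary permuting the three tensor factors of ℂ^d ⊗ ℂ^d ⊗ ℂ^d according to π. -/
noncomputable def permMat (d : ℕ) (π : Equiv.Perm (Fin 3)) :
    Matrix ((Fin d × Fin d) × Fin d) ((Fin d × Fin d) × Fin d) ℂ :=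
  fun p q => if ∀ i, triple p (π i) = triple q i then 1 else 0

/-- The antisymmetrization projection `Q_d^{(-)}` on ℂ^d ⊗ ℂ^d ⊗ ℂ^d. -/
noncomputable def antisym (d : ℕ) :
    Matrix ((Fin d × Fin d) × Fin d) ((Fin d × Fin d) × Fin d) ℂ :=
  (6 : ℂ)⁻¹ • ∑ π : Equiv.Perm (Fin 3), (((Equiv.Perm.sign π : ℤ) : ℂ)) • permMat d π

/-- Tensor product of two vectors. -/
def tens {m n : Type*} (u : m → ℂ) (v : n → ℂ) : m × n → ℂ := fun p => u p.1 * v p.2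

/-- The rank-one operator |v⟩⟨v|. -/
noncomputable def outer {n : Type*} (v : n → ℂ) : Matrix n n ℂ :=
  Matrix.vecMulVec v (star v)

def NumericalRadiusLE {n : Type*} [Fintype n] (X : Matrix n n ℂ) (c : ℝ) : Prop :=
  ∀ v : n → ℂ, ‖star v ⬝ᵥ (X *ᵥ v)‖ ≤ c * (star v ⬝ᵥ v).re

namespace NumericalRadiusLE

variable {n : Type*} [Fintype n] {X Y : Matrix n n ℂ} {c d : ℝ}

lemma mono (hX : NumericalRadiusLE X c) (hcd : c ≤ d) : NumericalRadiusLE X d := fun v =>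
  (hX v).trans <| mul_le_mul_of_nonneg_right hcd
    (Complex.nonneg_iff.mp (dotProduct_star_self_nonneg v)).1

lemma add (hX : NumericalRadiusLE X c) (hY : NumericalRadiusLE Y d) :
    NumericalRadiusLE (X + Y) (c + d) := fun v => by
  rw [add_mulVec, dotProduct_add, add_mul]
  exact (norm_add_le _ _).trans (add_le_add (hX v) (hY v))

lemma smul (hX : NumericalRadiusLE X c) (z : ℂ) : NumericalRadiusLE (z • X) (‖z‖ * c) :=
  fun v => by
  rw [smul_mulVec, dotProduct_smul, smul_eq_mul, norm_mul, mul_assoc]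
  exact mul_le_mul_of_nonneg_left (hX v) (norm_nonneg z)

lemma conj_unitary [DecidableEq n] (hX : NumericalRadiusLE X c) {W : Matrix n n ℂ}
    (hW : W ∈ unitaryGroup n ℂ) : NumericalRadiusLE (W * X * star W) c := fun v => by
  rw [star_eq_conjTranspose]
  have hWW : W * Wᴴ = 1 := by
    simpa [star_eq_conjTranspose] using (Unitary.mem_iff.mp hW).2
  have hquad : star v ⬝ᵥ ((W * X * Wᴴ) *ᵥ v) = star (Wᴴ *ᵥ v) ⬝ᵥ (X *ᵥ (Wᴴ *ᵥ v)) := by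
    rw [star_mulVec, conjTranspose_conjTranspose, ← mulVec_mulVec, ← mulVec_mulVec,
      dotProduct_mulVec]
  have hnorm : star v ⬝ᵥ v = star (Wᴴ *ᵥ v) ⬝ᵥ (Wᴴ *ᵥ v) := by
    rw [star_mulVec, conjTranspose_conjTranspose, dotProduct_mulVec, vecMul_vecMul, hWW,
      vecMul_one]
  rw [hquad, hnorm]
  exact hX _

lemma submatrix_equiv {m : Type*} [Fintype m] (hX : NumericalRadiusLE X c) (e : m ≃ n) :
    NumericalRadiusLE (X.submatrix e e) c := fun v => by
  have hquad : star v ⬝ᵥ (X.submatrix e e *ᵥ v)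
      = star (v ∘ e.symm) ⬝ᵥ (X *ᵥ (v ∘ e.symm)) := by
    rw [submatrix_mulVec_equiv, ← comp_equiv_dotProduct_comp_equiv _ _ e.symm,
      Function.comp_assoc, e.self_comp_symm, Function.comp_id]
    rfl
  have hnorm : star v ⬝ᵥ v = star (v ∘ e.symm) ⬝ᵥ (v ∘ e.symm) :=
    (comp_equiv_dotProduct_comp_equiv _ _ e.symm).symm
  rw [hquad, hnorm]
  exact hX _

end NumericalRadiusLE

section NumericalRadius

variable {n : Type*} [Fintype n]

lemma numericalRadiusLE_blockDiagonal {o : Type*} [Fintype o] [DecidableEq o]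
    {M : o → Matrix n n ℂ} {c : ℝ} (hM : ∀ k, NumericalRadiusLE (M k) c) :
    NumericalRadiusLE (blockDiagonal M) c := fun v => by
  have hquad : star v ⬝ᵥ (blockDiagonal M *ᵥ v)
      = ∑ k, star (fun i => v (i, k)) ⬝ᵥ (M k *ᵥ fun i => v (i, k)) := by
    simp only [dotProduct, mulVec, blockDiagonal_apply, Fintype.sum_prod_type, Pi.star_apply,
      ite_mul, zero_mul, Finset.sum_ite_eq, Finset.mem_univ, if_true, Finset.mul_sum]
    rw [Finset.sum_comm]
  have hnorm : (star v ⬝ᵥ v).re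
      = ∑ k, (star (fun i => v (i, k)) ⬝ᵥ fun i => v (i, k)).re := by
    simp only [dotProduct, Fintype.sum_prod_type, Pi.star_apply, Complex.re_sum]
    rw [Finset.sum_comm]
  rw [hquad, hnorm, Finset.mul_sum]
  exact (norm_sum_le _ _).trans (Finset.sum_le_sum fun k _ => hM k _)

lemma numericalRadiusLE_opNorm [DecidableEq n] (A : Matrix n n ℂ) :
    NumericalRadiusLE A (opNorm A) := fun v => by
  set x : EuclideanSpace ℂ n := WithLp.toLp 2 v
  have hquad : star v ⬝ᵥ (A *ᵥ v) = inner ℂ x (toEuclideanCLM (𝕜 := ℂ) A x) := by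
    rw [EuclideanSpace.inner_eq_star_dotProduct, dotProduct_comm]
    rfl
  have hnorm : (star v ⬝ᵥ v).re = ‖x‖ ^ 2 := by
    rw [← inner_self_eq_norm_sq (𝕜 := ℂ), EuclideanSpace.inner_eq_star_dotProduct,
      dotProduct_comm]
    rfl
  rw [hquad, hnorm, opNorm]
  calc _ ≤ ‖x‖ * ‖toEuclideanCLM (𝕜 := ℂ) A x‖ := norm_inner_le_norm _ _
    _ ≤ ‖x‖ * (‖toEuclideanCLM (𝕜 := ℂ) A‖ * ‖x‖) :=
        mul_le_mul_of_nonneg_left (ContinuousLinearMap.le_opNorm _ _) (norm_nonneg _)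
    _ = _ := by ring

end NumericalRadius

section Spectral

variable {n : Type*} [Fintype n] [DecidableEq n] {T : Matrix n n ℂ}

lemma star_eigenvectorBasis_dotProduct_self (hT : T.IsHermitian) (j : n) :
    star ⇑(hT.eigenvectorBasis j) ⬝ᵥ ⇑(hT.eigenvectorBasis j) = 1 := by
  rw [dotProduct_comm, ← EuclideanSpace.inner_eq_star_dotProduct, inner_self_eq_norm_sq_to_K,
    hT.eigenvectorBasis.orthonormal.1 j]
  simp

lemma abs_eigenvalues_le_opNorm (hT : T.IsHermitian) (j : n) :
    |hT.eigenvalues j| ≤ opNorm T := by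
  rw [hT.eigenvalues_eq j]
  calc _ ≤ ‖star ⇑(hT.eigenvectorBasis j) ⬝ᵥ (T *ᵥ ⇑(hT.eigenvectorBasis j))‖ :=
        Complex.abs_re_le_norm _
    _ ≤ opNorm T * (star ⇑(hT.eigenvectorBasis j) ⬝ᵥ ⇑(hT.eigenvectorBasis j)).re :=
        numericalRadiusLE_opNorm T _
    _ = opNorm T := by simp [star_eigenvectorBasis_dotProduct_self]

lemma exists_eq_conj_diagonal_of_isHermitian (hT : T.IsHermitian) :
    ∃ U ∈ unitaryGroup n ℂ, ∃ w : n → ℝ, (∀ j, |w j| ≤ opNorm T) ∧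
      T = U * diagonal (fun j => (w j : ℂ)) * star U :=
  ⟨_, hT.eigenvectorUnitary.2, hT.eigenvalues, abs_eigenvalues_le_opNorm hT, hT.spectral_theorem⟩

lemma trace_mul_eq_sum_eigenvalues_mul (hT : T.IsHermitian) (X : Matrix n n ℂ) :
    (T * X).trace = ∑ j, (hT.eigenvalues j : ℂ) *
      (star ⇑(hT.eigenvectorBasis j) ⬝ᵥ (X *ᵥ ⇑(hT.eigenvectorBasis j))) := by
  set U : Matrix n n ℂ := (hT.eigenvectorUnitary : Matrix n n ℂ)
  set D := diagonal (fun j => (hT.eigenvalues j : ℂ))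
  have hspec : T = U * D * star U := hT.spectral_theorem
  have hcycle : (T * X).trace = (D * (star U * X * U)).trace := by
    rw [hspec, show U * D * star U * X = U * (D * (star U * X)) by simp only [mul_assoc],
      trace_mul_comm, mul_assoc, mul_assoc]
  have hdiag : ∀ j, (star U * X * U) j j
      = star ⇑(hT.eigenvectorBasis j) ⬝ᵥ (X *ᵥ ⇑(hT.eigenvectorBasis j)) := fun j => by
    simp only [U, mul_apply, star_apply, IsHermitian.eigenvectorUnitary_apply, dotProduct,
      mulVec, Pi.star_apply, Finset.sum_mul, Finset.mul_sum, mul_assoc]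
    exact Finset.sum_comm
  rw [hcycle, trace]
  simp only [D, diag, diagonal_mul, hdiag]

lemma norm_trace_mul_le {X : Matrix n n ℂ} {c : ℝ} (hT : T.IsHermitian)
    (hX : NumericalRadiusLE X c) : ‖(T * X).trace‖ ≤ c * ∑ j, |hT.eigenvalues j| := by
  rw [trace_mul_eq_sum_eigenvalues_mul hT, Finset.mul_sum]
  refine (norm_sum_le _ _).trans (Finset.sum_le_sum fun j _ => ?_)
  rw [norm_mul, Complex.norm_real, Real.norm_eq_abs, mul_comm c]
  refine mul_le_mul_of_nonneg_left ((hX _).trans_eq ?_) (abs_nonneg _)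
  simp [star_eigenvectorBasis_dotProduct_self]

open scoped MatrixOrder in
lemma trace_eq_sum_abs_eigenvalues (hT : T.IsHermitian) {Tabs : Matrix n n ℂ}
    (hTabs : Tabs.PosSemidef) (hsq : Tabs * Tabs = T * T) :
    Tabs.trace = ∑ j, ((|hT.eigenvalues j| : ℝ) : ℂ) := by
  have hTabs_eq : Tabs = cfc (fun x : ℝ => |x|) T := by
    refine (CFC.sq_eq_sq_iff Tabs _ hTabs.nonneg (cfc_nonneg fun x _ => abs_nonneg x)).mp ?_
    have : IsSelfAdjoint T := hT
    rw [sq, hsq, ← cfc_pow (fun x => |x|) 2 T]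
    simp only [sq_abs]
    rw [cfc_pow_id T 2, sq]
  rw [hTabs_eq, hT.cfc_eq, IsHermitian.cfc, Unitary.conjStarAlgAut_apply, trace_mul_cycle,
    Unitary.coe_star_mul_self, one_mul, trace_diagonal]
  simp

lemma norm_trace_mul_le_trace_abs {Tabs X : Matrix n n ℂ} {c : ℝ} (hT : T.IsHermitian)
    (hTabs : Tabs.PosSemidef) (hsq : Tabs * Tabs = T * T) (hX : NumericalRadiusLE X c) :
    ‖(T * X).trace‖ ≤ c * Tabs.trace.re := by
  rw [trace_eq_sum_abs_eigenvalues hT hTabs hsq, Complex.re_sum]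
  simpa using norm_trace_mul_le hT hX

end Spectral

section Kronecker

variable {ι κ μ : Type*} [Fintype ι] [Fintype κ] [Fintype μ]

lemma kronecker_conj (U M : Matrix κ κ ℂ) (V N : Matrix μ μ ℂ) :
    (U * M * star U) ⊗ₖ (V * N * star V) = (U ⊗ₖ V) * (M ⊗ₖ N) * star (U ⊗ₖ V) := by
  rw [star_eq_conjTranspose, star_eq_conjTranspose, star_eq_conjTranspose,
    conjTranspose_kronecker, mul_kronecker_mul, mul_kronecker_mul]

lemma smul_kronecker_one_add_smul_one_kronecker [DecidableEq κ] [DecidableEq μ]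
    {U : Matrix κ κ ℂ} {V : Matrix μ μ ℂ} (hU : U ∈ unitaryGroup κ ℂ)
    (hV : V ∈ unitaryGroup μ ℂ) (w : κ → ℂ) (z : μ → ℂ) (a b : ℂ) :
    a • ((U * diagonal w * star U) ⊗ₖ (1 : Matrix μ μ ℂ))
        + b • ((1 : Matrix κ κ ℂ) ⊗ₖ (V * diagonal z * star V))
      = (U ⊗ₖ V) * diagonal (fun p => a * w p.1 + b * z p.2) * star (U ⊗ₖ V) := by
  have hdiag : diagonal (fun p : κ × μ => a * w p.1 + b * z p.2)
      = a • (diagonal w ⊗ₖ 1) + b • (1 ⊗ₖ diagonal z) := by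
    rw [← diagonal_one (n := κ), ← diagonal_one (n := μ), diagonal_kronecker_diagonal,
      diagonal_kronecker_diagonal, ← diagonal_smul, ← diagonal_smul, diagonal_add]
    simp
  simp only [hdiag, Matrix.mul_add, Matrix.add_mul, Matrix.mul_smul, Matrix.smul_mul,
    ← kronecker_conj, mul_one, Unitary.mul_star_self_of_mem hU, Unitary.mul_star_self_of_mem hV]

lemma numericalRadiusLE_kronecker_add_kronecker [DecidableEq ι] [DecidableEq κ]
    {A₁ A₂ : Matrix ι ι ℂ} (hA₁ : NumericalRadiusLE A₁ 1) (hA₂ : NumericalRadiusLE A₂ 1)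
    {W : Matrix κ κ ℂ} (hW : W ∈ unitaryGroup κ ℂ) {f g : κ → ℂ} {c : ℝ}
    (hfg : ∀ k, ‖f k‖ + ‖g k‖ ≤ c) :
    NumericalRadiusLE (A₁ ⊗ₖ (W * diagonal f * star W) + A₂ ⊗ₖ (W * diagonal g * star W)) c := by
  have hdiag : NumericalRadiusLE (A₁ ⊗ₖ diagonal f + A₂ ⊗ₖ diagonal g) c := by
    rw [kronecker_diagonal, kronecker_diagonal, ← blockDiagonal_add]
    refine numericalRadiusLE_blockDiagonal fun k => ?_
    simpa using ((hA₁.smul (f k)).add (hA₂.smul (g k))).mono (by simpa using hfg k)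
  convert hdiag.conj_unitary (kronecker_mem_unitary (one_mem _) hW) using 1
  rw [mul_add, add_mul, ← kronecker_conj, ← kronecker_conj]
  simp only [star_one, mul_one, one_mul]

end Kronecker

lemma abs_add_add_abs_add_le_two {p q r s : ℝ} (hp : |p| ≤ 1) (hq : |q| ≤ 1) (hr : |r| ≤ 1)
    (hs : |s| ≤ 1) (h : p * q = -(r * s)) : |p + q| + |r + s| ≤ 2 := by
  -- As `p * q + r * s = 0`, for signs `ε, δ = ±1` the nonnegative quantity
  -- `(1 - ε p) (1 - ε q) + (1 - δ r) (1 - δ s)` equals `2 - ε (p + q) - δ (r + s)`.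
  rcases abs_le.mp hp with ⟨hp1, hp2⟩
  rcases abs_le.mp hq with ⟨hq1, hq2⟩
  rcases abs_le.mp hr with ⟨hr1, hr2⟩
  rcases abs_le.mp hs with ⟨hs1, hs2⟩
  rcases abs_cases (p + q) with ⟨h1, _⟩ | ⟨h1, _⟩ <;>
    rcases abs_cases (r + s) with ⟨h2, _⟩ | ⟨h2, _⟩ <;> rw [h1, h2] <;>
    nlinarith [mul_nonneg (by linarith : (0:ℝ) ≤ 1 - p) (by linarith : (0:ℝ) ≤ 1 - q),
      mul_nonneg (by linarith : (0:ℝ) ≤ 1 + p) (by linarith : (0:ℝ) ≤ 1 + q),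
      mul_nonneg (by linarith : (0:ℝ) ≤ 1 - r) (by linarith : (0:ℝ) ≤ 1 - s),
      mul_nonneg (by linarith : (0:ℝ) ≤ 1 + r) (by linarith : (0:ℝ) ≤ 1 + s)]

lemma numericalRadiusLE_chshOperator {ι κ μ : Type*} [Fintype ι] [DecidableEq ι] [Fintype κ]
    [DecidableEq κ] [Fintype μ] [DecidableEq μ] {A₁ A₂ : Matrix ι ι ℂ}
    {B₁ : Matrix κ κ ℂ} {B₂ : Matrix μ μ ℂ} (hnA₁ : opNorm A₁ ≤ 1) (hnA₂ : opNorm A₂ ≤ 1)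
    (hB₁ : B₁.IsHermitian) (hB₂ : B₂.IsHermitian) (hnB₁ : opNorm B₁ ≤ 1)
    (hnB₂ : opNorm B₂ ≤ 1) {γ₁₁ γ₁₂ γ₂₁ γ₂₂ : ℝ} (hγ₁₁ : |γ₁₁| ≤ 1) (hγ₁₂ : |γ₁₂| ≤ 1)
    (hγ₂₁ : |γ₂₁| ≤ 1) (hγ₂₂ : |γ₂₂| ≤ 1) (hγ : γ₁₁ * γ₁₂ = -(γ₂₁ * γ₂₂)) :
    NumericalRadiusLE
      (A₁ ⊗ₖ ((γ₁₁ : ℂ) • (B₁ ⊗ₖ (1 : Matrix μ μ ℂ)) + (γ₁₂ : ℂ) • ((1 : Matrix κ κ ℂ) ⊗ₖ B₂))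
        + A₂ ⊗ₖ ((γ₂₁ : ℂ) • (B₁ ⊗ₖ (1 : Matrix μ μ ℂ))
          + (γ₂₂ : ℂ) • ((1 : Matrix κ κ ℂ) ⊗ₖ B₂)))
      2 := by
  obtain ⟨U, hU, w, hw, rfl⟩ := exists_eq_conj_diagonal_of_isHermitian hB₁
  obtain ⟨V, hV, z, hz, rfl⟩ := exists_eq_conj_diagonal_of_isHermitian hB₂
  rw [smul_kronecker_one_add_smul_one_kronecker hU hV,
    smul_kronecker_one_add_smul_one_kronecker hU hV]
  refine numericalRadiusLE_kronecker_add_kronecker ((numericalRadiusLE_opNorm A₁).mono hnA₁)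
    ((numericalRadiusLE_opNorm A₂).mono hnA₂) (kronecker_mem_unitary hU hV) fun p => ?_
  have hw := (hw p.1).trans hnB₁
  have hz := (hz p.2).trans hnB₂
  have hmul : ∀ {x y : ℝ}, |x| ≤ 1 → |y| ≤ 1 → |x * y| ≤ 1 := fun hx hy =>
    (abs_mul _ _).trans_le (mul_le_one₀ hx (abs_nonneg _) hy)
  simp only [← Complex.ofReal_mul, ← Complex.ofReal_add, Complex.norm_real, Real.norm_eq_abs]
  exact abs_add_add_abs_add_le_two (hmul hγ₁₁ hw) (hmul hγ₁₂ hz) (hmul hγ₂₁ hw) (hmul hγ₂₂ hz)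
    (by linear_combination (w p.1 * z p.2) * hγ)

lemma trace_ptr3_mul [DecidableEq γ] (T : Matrix ((α × β) × γ) ((α × β) × γ) ℂ)
    (M : Matrix (α × β) (α × β) ℂ) :
    (ptr3 T * M).trace = (T * (M ⊗ₖ (1 : Matrix γ γ ℂ))).trace := by
  simp only [trace, diag, mul_apply, ptr3, kroneckerMap_apply, one_apply, mul_ite, mul_one,
    mul_zero, Finset.sum_mul, Fintype.sum_prod_type (f := fun p : (α × β) × γ => _),
    Finset.sum_ite_eq', Finset.mem_univ, if_true]
  exact Finset.sum_congr rfl fun _ _ => Finset.sum_comm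

lemma trace_ptr2_mul_kronecker [DecidableEq β] (T : Matrix ((α × β) × γ) ((α × β) × γ) ℂ)
    (A : Matrix α α ℂ) (C : Matrix γ γ ℂ) :
    (ptr2 T * (A ⊗ₖ C)).trace = (T * ((A ⊗ₖ (1 : Matrix β β ℂ)) ⊗ₖ C)).trace := by
  simp only [trace, diag, mul_apply, ptr2, kroneckerMap_apply, one_apply, mul_ite, mul_one,
    mul_zero, ite_mul, zero_mul, Finset.sum_mul, Fintype.sum_prod_type, Finset.sum_ite_irrel,
    Finset.sum_const_zero, Finset.sum_ite_eq', Finset.mem_univ, if_true]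
  refine Finset.sum_congr rfl fun _ _ => ?_
  conv_rhs => rw [Finset.sum_comm]
  refine Finset.sum_congr rfl fun _ _ => ?_
  conv_rhs => rw [Finset.sum_comm]
  exact Finset.sum_congr rfl fun _ _ => Finset.sum_comm

lemma kronecker_kronecker_submatrix_prodAssoc {ι κ μ : Type*} (A : Matrix ι ι ℂ)
    (B : Matrix κ κ ℂ) (C : Matrix μ μ ℂ) :
    (A ⊗ₖ (B ⊗ₖ C)).submatrix (Equiv.prodAssoc ι κ μ) (Equiv.prodAssoc ι κ μ)
      = A ⊗ₖ B ⊗ₖ C := by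
  rw [← kronecker_assoc', submatrix_submatrix, Equiv.symm_comp_self, submatrix_id_id]

theorem norm_chsh_le_of_ptr2_eq_ptr3 {ι κ : Type*} [Fintype ι] [DecidableEq ι] [Fintype κ]
    [DecidableEq κ] {ρ : Matrix (ι × κ) (ι × κ) ℂ}
    {T Tabs : Matrix ((ι × κ) × κ) ((ι × κ) × κ) ℂ} (hT : T.IsHermitian) (h₂ : ptr2 T = ρ)
    (h₃ : ptr3 T = ρ) (hTabs : Tabs.PosSemidef) (hsq : Tabs * Tabs = T * T)
    {A₁ A₂ : Matrix ι ι ℂ} {B₁ B₂ : Matrix κ κ ℂ} (hnA₁ : opNorm A₁ ≤ 1) (hnA₂ : opNorm A₂ ≤ 1)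
    (hB₁ : B₁.IsHermitian) (hB₂ : B₂.IsHermitian) (hnB₁ : opNorm B₁ ≤ 1)
    (hnB₂ : opNorm B₂ ≤ 1) {γ₁₁ γ₁₂ γ₂₁ γ₂₂ : ℝ} (hγ₁₁ : |γ₁₁| ≤ 1) (hγ₁₂ : |γ₁₂| ≤ 1)
    (hγ₂₁ : |γ₂₁| ≤ 1) (hγ₂₂ : |γ₂₂| ≤ 1) (hγ : γ₁₁ * γ₁₂ = -(γ₂₁ * γ₂₂)) :
    ‖(γ₁₁ : ℂ) * (ρ * (A₁ ⊗ₖ B₁)).trace + (γ₁₂ : ℂ) * (ρ * (A₁ ⊗ₖ B₂)).trace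
        + (γ₂₁ : ℂ) * (ρ * (A₂ ⊗ₖ B₁)).trace + (γ₂₂ : ℂ) * (ρ * (A₂ ⊗ₖ B₂)).trace‖
      ≤ 2 * Tabs.trace.re := by
  set e := Equiv.prodAssoc ι κ κ
  have hB₁_third : ∀ A : Matrix ι ι ℂ, (ρ * (A ⊗ₖ B₁)).trace
      = (T * (A ⊗ₖ (B₁ ⊗ₖ (1 : Matrix κ κ ℂ))).submatrix e e).trace := fun A => by
    rw [← h₃, trace_ptr3_mul, kronecker_kronecker_submatrix_prodAssoc]
  have hB₂_second : ∀ A : Matrix ι ι ℂ, (ρ * (A ⊗ₖ B₂)).trace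
      = (T * (A ⊗ₖ ((1 : Matrix κ κ ℂ) ⊗ₖ B₂)).submatrix e e).trace := fun A => by
    rw [← h₂, trace_ptr2_mul_kronecker, kronecker_kronecker_submatrix_prodAssoc]
  rw [hB₁_third, hB₁_third, hB₂_second, hB₂_second]
  refine le_of_eq_of_le ?_ <| norm_trace_mul_le_trace_abs hT hTabs hsq <|
    (numericalRadiusLE_chshOperator hnA₁ hnA₂ hB₁ hB₂ hnB₁ hnB₂ hγ₁₁ hγ₁₂ hγ₂₁ hγ₂₂
      hγ).submatrix_equiv e
  simp only [kronecker_add, kronecker_smul, submatrix_add, submatrix_smul, Pi.add_apply,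
    Pi.smul_apply, Matrix.mul_add, Matrix.mul_smul, trace_add, trace_smul, smul_eq_mul,
    add_assoc]

def swapOuter {ι κ μ : Type*} : (μ × κ) × ι ≃ (ι × κ) × μ where
  toFun p := ((p.2, p.1.2), p.1.1)
  invFun p := ((p.2, p.1.2), p.1.1)
  left_inv _ := rfl
  right_inv _ := rfl

lemma ptr2_submatrix_swapOuter {ι κ μ : Type*} [Fintype κ]
    (T : Matrix ((ι × κ) × μ) ((ι × κ) × μ) ℂ) :
    ptr2 (T.submatrix swapOuter swapOuter) =
      (ptr2 T).submatrix (Equiv.prodComm μ ι) (Equiv.prodComm μ ι) :=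
  rfl

lemma ptr3_submatrix_swapOuter {ι κ μ : Type*} [Fintype ι]
    (T : Matrix ((ι × κ) × μ) ((ι × κ) × μ) ℂ) :
    ptr3 (T.submatrix swapOuter swapOuter) =
      (ptr1 T).submatrix (Equiv.prodComm μ κ) (Equiv.prodComm μ κ) :=
  rfl

lemma trace_submatrix_equiv {m n : Type*} [Fintype m] [Fintype n] (M : Matrix n n ℂ)
    (e : m ≃ n) : (M.submatrix e e).trace = M.trace :=
  Equiv.sum_comp e fun j => M j j

lemma trace_submatrix_prodComm_mul_kronecker (ρ : Matrix (α × β) (α × β) ℂ)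
    (A : Matrix α α ℂ) (B : Matrix β β ℂ) :
    (ρ.submatrix (Equiv.prodComm β α) (Equiv.prodComm β α) * (B ⊗ₖ A)).trace
      = (ρ * (A ⊗ₖ B)).trace := by
  have hswap : B ⊗ₖ A = (A ⊗ₖ B).submatrix (Equiv.prodComm β α) (Equiv.prodComm β α) := by
    ext
    simp [mul_comm]
  rw [hswap, submatrix_mul_equiv, trace_submatrix_equiv]

/-- `Tabs` is `|T|`, the positive square root of `T * T`, so `Tabs.trace.re` is the trace norm
`‖T‖₁`; likewise for `Sabs` and `S`. -/
theorem chsh_form_inequalities_general {d₁ d₂ : ℕ}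
    (ρ : Matrix (Fin d₁ × Fin d₂) (Fin d₁ × Fin d₂) ℂ)
    (γ₁₁ γ₁₂ γ₂₁ γ₂₂ : ℝ)
    (hγ₁₁ : |γ₁₁| ≤ 1) (hγ₁₂ : |γ₁₂| ≤ 1) (hγ₂₁ : |γ₂₁| ≤ 1) (hγ₂₂ : |γ₂₂| ≤ 1)
    (A₁ A₂ : Matrix (Fin d₁) (Fin d₁) ℂ) (B₁ B₂ : Matrix (Fin d₂) (Fin d₂) ℂ)
    (hA₁ : A₁.IsHermitian) (hA₂ : A₂.IsHermitian) (hB₁ : B₁.IsHermitian) (hB₂ : B₂.IsHermitian)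
    (hnA₁ : opNorm A₁ ≤ 1) (hnA₂ : opNorm A₂ ≤ 1) (hnB₁ : opNorm B₁ ≤ 1) (hnB₂ : opNorm B₂ ≤ 1) :
    (∀ (T Tabs : Matrix ((Fin d₁ × Fin d₂) × Fin d₂) ((Fin d₁ × Fin d₂) × Fin d₂) ℂ),
      γ₁₁ * γ₁₂ = -(γ₂₁ * γ₂₂) → IsSource122 ρ T →
      Tabs.PosSemidef → Tabs * Tabs = T * T →
      ‖(γ₁₁ : ℂ) * (ρ * (A₁ ⊗ₖ B₁)).trace + (γ₁₂ : ℂ) * (ρ * (A₁ ⊗ₖ B₂)).trace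
          + (γ₂₁ : ℂ) * (ρ * (A₂ ⊗ₖ B₁)).trace + (γ₂₂ : ℂ) * (ρ * (A₂ ⊗ₖ B₂)).trace‖
        ≤ 2 * Tabs.trace.re)
    ∧ (∀ (S Sabs : Matrix ((Fin d₁ × Fin d₁) × Fin d₂) ((Fin d₁ × Fin d₁) × Fin d₂) ℂ),
      γ₁₁ * γ₂₁ = -(γ₁₂ * γ₂₂) → IsSource112 ρ S →
      Sabs.PosSemidef → Sabs * Sabs = S * S →
      ‖(γ₁₁ : ℂ) * (ρ * (A₁ ⊗ₖ B₁)).trace + (γ₁₂ : ℂ) * (ρ * (A₁ ⊗ₖ B₂)).trace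
          + (γ₂₁ : ℂ) * (ρ * (A₂ ⊗ₖ B₁)).trace + (γ₂₂ : ℂ) * (ρ * (A₂ ⊗ₖ B₂)).trace‖
        ≤ 2 * Sabs.trace.re) := by
  refine ⟨fun T Tabs hγ ⟨hT, h₂, h₃⟩ hTabs hsq => norm_chsh_le_of_ptr2_eq_ptr3 hT h₂ h₃ hTabs hsq
    hnA₁ hnA₂ hB₁ hB₂ hnB₁ hnB₂ hγ₁₁ hγ₁₂ hγ₂₁ hγ₂₂ hγ, fun S Sabs hγ ⟨hS, h₁, h₂⟩ hSabs hsq => ?_⟩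
  have hswapped := norm_chsh_le_of_ptr2_eq_ptr3 (hS.submatrix swapOuter)
    (by rw [ptr2_submatrix_swapOuter, h₂]) (by rw [ptr3_submatrix_swapOuter, h₁])
    ((posSemidef_submatrix_equiv swapOuter).mpr hSabs)
    (by rw [submatrix_mul_equiv, submatrix_mul_equiv, hsq])
    hnB₁ hnB₂ hA₁ hA₂ hnA₁ hnA₂ hγ₁₁ hγ₂₁ hγ₁₂ hγ₂₂ hγ
  simp only [trace_submatrix_prodComm_mul_kronecker, trace_submatrix_equiv] at hswapped
  convert hswapped using 2
  ring

/-- the quantum CHSH-form inequalities (35) and (36). `Tabs.trace` (resp.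
`Sabs.trace`) is the trace norm of the source-operator `T` (resp. `S`). -/
theorem chsh_form_inequalities {d₁ d₂ : ℕ}
    (ρ : Matrix (Fin d₁ × Fin d₂) (Fin d₁ × Fin d₂) ℂ) (hρ : IsDensityMatrix ρ)
    (γ₁₁ γ₁₂ γ₂₁ γ₂₂ : ℝ)
    (hγ₁₁ : |γ₁₁| ≤ 1) (hγ₁₂ : |γ₁₂| ≤ 1) (hγ₂₁ : |γ₂₁| ≤ 1) (hγ₂₂ : |γ₂₂| ≤ 1)
    (A₁ A₂ : Matrix (Fin d₁) (Fin d₁) ℂ) (B₁ B₂ : Matrix (Fin d₂) (Fin d₂) ℂ)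
    (hA₁ : A₁.IsHermitian) (hA₂ : A₂.IsHermitian) (hB₁ : B₁.IsHermitian) (hB₂ : B₂.IsHermitian)
    (hnA₁ : opNorm A₁ ≤ 1) (hnA₂ : opNorm A₂ ≤ 1) (hnB₁ : opNorm B₁ ≤ 1) (hnB₂ : opNorm B₂ ≤ 1) :
    (∀ (T Tabs : Matrix ((Fin d₁ × Fin d₂) × Fin d₂) ((Fin d₁ × Fin d₂) × Fin d₂) ℂ),
      γ₁₁ * γ₁₂ = -(γ₂₁ * γ₂₂) → IsSource122 ρ T →
      Tabs.PosSemidef → Tabs * Tabs = T * T →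
      ‖(γ₁₁ : ℂ) * (ρ * (A₁ ⊗ₖ B₁)).trace + (γ₁₂ : ℂ) * (ρ * (A₁ ⊗ₖ B₂)).trace
          + (γ₂₁ : ℂ) * (ρ * (A₂ ⊗ₖ B₁)).trace + (γ₂₂ : ℂ) * (ρ * (A₂ ⊗ₖ B₂)).trace‖
        ≤ 2 * Tabs.trace.re)
    ∧ (∀ (S Sabs : Matrix ((Fin d₁ × Fin d₁) × Fin d₂) ((Fin d₁ × Fin d₁) × Fin d₂) ℂ),
      γ₁₁ * γ₂₁ = -(γ₁₂ * γ₂₂) → IsSource112 ρ S →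
      Sabs.PosSemidef → Sabs * Sabs = S * S →
      ‖(γ₁₁ : ℂ) * (ρ * (A₁ ⊗ₖ B₁)).trace + (γ₁₂ : ℂ) * (ρ * (A₁ ⊗ₖ B₂)).trace
          + (γ₂₁ : ℂ) * (ρ * (A₂ ⊗ₖ B₁)).trace + (γ₂₂ : ℂ) * (ρ * (A₂ ⊗ₖ B₂)).trace‖
        ≤ 2 * Sabs.trace.re) :=
  chsh_form_inequalities_general ρ γ₁₁ γ₁₂ γ₂₁ γ₂₂ hγ₁₁ hγ₁₂ hγ₂₁ hγ₂₂ A₁ A₂ B₁ B₂ hA₁ hA₂ hB₁ hB₂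
    hnA₁ hnA₂ hnB₁ hnB₂

end BellPaper
end

section
/- Let ρ be a density matrix on ℂ^d⊗ℂ^d, R a positive semidefinite source-operator of type T₁₂₂ for ρ, σ_R = tr^{(1)}[R] its reduced density matrix on ℂ^d⊗ℂ^d, and ε ∈ {+1, −1}. Suppose W₂, W̃₂ are Hermitian matrices on ℂ^d with operator norms at most 1 such that tr[σ_R(W₂⊗W̃₂)] = ε·tr[ρ(W₂⊗W̃₂)]. Then for every Hermitian matrix W₁ on ℂ^d with operator norm at most 1: |tr[ρ(W₁⊗W₂)] − tr[ρ(W₁⊗W̃₂)]| ≤ 1 − ε·tr[ρ(W₂⊗W̃₂)]. -/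
open Matrix
open scoped Kronecker ComplexOrder

namespace BellPaper

variable {α β γ : Type*} [Fintype α] [Fintype β] [Fintype γ]

theorem _root_.Matrix.sub_kronecker {l m n p R : Type*} [Ring R] (A₁ A₂ : Matrix l m R)
    (B : Matrix n p R) : (A₁ - A₂) ⊗ₖ B = A₁ ⊗ₖ B - A₂ ⊗ₖ B := by
  ext; simp [sub_mul]

theorem _root_.Matrix.kronecker_sub {l m n p R : Type*} [Ring R] (A : Matrix l m R)
    (B₁ B₂ : Matrix n p R) : A ⊗ₖ (B₁ - B₂) = A ⊗ₖ B₁ - A ⊗ₖ B₂ := by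
  ext; simp [mul_sub]

theorem _root_.Matrix.PosSemidef.trace_mul_nonneg {n : Type*} [Fintype n] [DecidableEq n]
    {A B : Matrix n n ℂ} (hA : A.PosSemidef) (hB : B.PosSemidef) : 0 ≤ (A * B).trace := by
  open scoped MatrixOrder in
  obtain ⟨P, rfl⟩ := CStarAlgebra.nonneg_iff_eq_star_mul_self.mp hA.nonneg
  rw [star_eq_conjTranspose, Matrix.mul_assoc, trace_mul_comm]
  exact (hB.mul_mul_conjTranspose_same P).trace_nonneg

section Contraction

variable {n : Type*} [Fintype n] [DecidableEq n] {W : Matrix n n ℂ}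

open scoped Matrix.Norms.L2Operator MatrixOrder in
theorem posSemidef_one_sub_of_opNorm_le_one (hW : W.IsHermitian) (h : opNorm W ≤ 1) :
    (1 - W).PosSemidef := by
  rw [← le_iff]
  calc W ≤ algebraMap ℝ (Matrix n n ℂ) ‖W‖ := hW.isSelfAdjoint.le_algebraMap_norm_self
    _ ≤ algebraMap ℝ (Matrix n n ℂ) 1 := by gcongr; exact h
    _ = 1 := map_one _

theorem posSemidef_one_add_of_opNorm_le_one (hW : W.IsHermitian) (h : opNorm W ≤ 1) :
    (1 + W).PosSemidef := by
  simpa using posSemidef_one_sub_of_opNorm_le_one hW.neg (by simpa [opNorm] using h)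

end Contraction

theorem trace_ptr3 (R : Matrix ((α × β) × γ) ((α × β) × γ) ℂ) : (ptr3 R).trace = R.trace := by
  simp only [trace, diag, ptr3, Fintype.sum_prod_type]

theorem trace_mul_kronecker_one_eq_ptr3 (R : Matrix ((α × β) × γ) ((α × β) × γ) ℂ)
    [DecidableEq γ] (X : Matrix α α ℂ) (Y : Matrix β β ℂ) :
    (R * ((X ⊗ₖ Y) ⊗ₖ (1 : Matrix γ γ ℂ))).trace = (ptr3 R * (X ⊗ₖ Y)).trace := by
  simp only [trace, diag, mul_apply, ptr3, kroneckerMap_apply, one_apply, Fintype.sum_prod_type,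
    mul_ite, mul_one, mul_zero, Finset.sum_ite_eq', Finset.mem_univ, if_true, Finset.sum_mul]
  refine Finset.sum_congr rfl fun _ _ => Finset.sum_congr rfl fun _ _ => ?_
  rw [Finset.sum_comm]
  exact Finset.sum_congr rfl fun _ _ => Finset.sum_comm

theorem trace_mul_kronecker_one_kronecker_eq_ptr2 (R : Matrix ((α × β) × γ) ((α × β) × γ) ℂ)
    [DecidableEq β] (X : Matrix α α ℂ) (Y : Matrix γ γ ℂ) :
    (R * ((X ⊗ₖ (1 : Matrix β β ℂ)) ⊗ₖ Y)).trace = (ptr2 R * (X ⊗ₖ Y)).trace := by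
  simp only [trace, diag, mul_apply, ptr2, kroneckerMap_apply, one_apply, Fintype.sum_prod_type,
    mul_ite, ite_mul, mul_one, mul_zero, zero_mul, Finset.sum_ite_irrel, Finset.sum_const_zero,
    Finset.sum_ite_eq', Finset.mem_univ, if_true, Finset.sum_mul]
  refine Finset.sum_congr rfl fun _ _ => ?_
  rw [Finset.sum_comm]
  refine Finset.sum_congr rfl fun _ _ => ?_
  rw [Finset.sum_comm]
  exact Finset.sum_congr rfl fun _ _ => Finset.sum_comm

theorem trace_mul_one_kronecker_kronecker_eq_ptr1 (R : Matrix ((α × β) × γ) ((α × β) × γ) ℂ)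
    [DecidableEq α] (X : Matrix β β ℂ) (Y : Matrix γ γ ℂ) :
    (R * (((1 : Matrix α α ℂ) ⊗ₖ X) ⊗ₖ Y)).trace = (ptr1 R * (X ⊗ₖ Y)).trace := by
  simp only [trace, diag, mul_apply, ptr1, kroneckerMap_apply, one_apply, Fintype.sum_prod_type,
    mul_ite, ite_mul, mul_zero, zero_mul, one_mul, Finset.sum_ite_irrel, Finset.sum_const_zero,
    Finset.sum_ite_eq', Finset.mem_univ, if_true, Finset.sum_mul]
  rw [Finset.sum_comm]
  refine Finset.sum_congr rfl fun _ _ => ?_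
  rw [Finset.sum_comm]
  refine Finset.sum_congr rfl fun _ _ => ?_
  rw [Finset.sum_comm]
  exact Finset.sum_congr rfl fun _ _ => Finset.sum_comm

/- Bell's argument, writing `⟨X Y Z⟩ = tr[R (X ⊗ Y ⊗ Z)]`: for signs `s, t` the operator
`(1 + s A) ⊗ (1 + t B) ⊗ (1 - t C)` is positive, and the sum of its expectations for `(s, t)` and
`(-s, -t)` is `2 (⟨1 1 1⟩ - ⟨1 B C⟩ + s t (⟨A B 1⟩ - ⟨A 1 C⟩)) ≥ 0`. -/
theorem norm_trace_mul_sub_le_of_posSemidef [DecidableEq α] [DecidableEq β] [DecidableEq γ]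
    {R : Matrix ((α × β) × γ) ((α × β) × γ) ℂ} (hR : R.PosSemidef)
    {A : Matrix α α ℂ} {B : Matrix β β ℂ} {C : Matrix γ γ ℂ}
    (hA : (1 + A).PosSemidef) (hA' : (1 - A).PosSemidef)
    (hB : (1 + B).PosSemidef) (hB' : (1 - B).PosSemidef)
    (hC : (1 + C).PosSemidef) (hC' : (1 - C).PosSemidef) :
    ‖(R * ((A ⊗ₖ B) ⊗ₖ 1)).trace - (R * ((A ⊗ₖ 1) ⊗ₖ C)).trace‖
      ≤ (R.trace - (R * ((1 ⊗ₖ B) ⊗ₖ C)).trace).re := by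
  have h₁ := hR.trace_mul_nonneg ((hA.kronecker hB').kronecker hC)
  have h₂ := hR.trace_mul_nonneg ((hA'.kronecker hB).kronecker hC')
  have h₃ := hR.trace_mul_nonneg ((hA'.kronecker hB').kronecker hC)
  have h₄ := hR.trace_mul_nonneg ((hA.kronecker hB).kronecker hC')
  set x₁ := (R * (((1 + A) ⊗ₖ (1 - B)) ⊗ₖ (1 + C))).trace
  set x₂ := (R * (((1 - A) ⊗ₖ (1 + B)) ⊗ₖ (1 - C))).trace
  set x₃ := (R * (((1 - A) ⊗ₖ (1 - B)) ⊗ₖ (1 + C))).trace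
  set x₄ := (R * (((1 + A) ⊗ₖ (1 + B)) ⊗ₖ (1 - C))).trace
  obtain ⟨hdiff, hsum⟩ :
      4 * ((R * ((A ⊗ₖ B) ⊗ₖ 1)).trace - (R * ((A ⊗ₖ 1) ⊗ₖ C)).trace) = (x₃ + x₄) - (x₁ + x₂) ∧
      4 * (R.trace - (R * ((1 ⊗ₖ B) ⊗ₖ C)).trace) = (x₃ + x₄) + (x₁ + x₂) := by
    constructor <;>
    · simp only [x₁, x₂, x₃, x₄, add_kronecker, kronecker_add, sub_kronecker, kronecker_sub,
        one_kronecker_one, Matrix.mul_add, Matrix.mul_sub, Matrix.mul_one, trace_add, trace_sub]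
      ring
  have hre {x y : ℂ} (hx : 0 ≤ x) (hy : 0 ≤ y) : ‖x + y‖ = (x + y).re :=
    (Complex.re_eq_norm.mpr (add_nonneg hx hy)).symm
  rw [← mul_le_mul_iff_of_pos_left (show (0 : ℝ) < 4 by norm_num)]
  calc 4 * ‖(R * ((A ⊗ₖ B) ⊗ₖ 1)).trace - (R * ((A ⊗ₖ 1) ⊗ₖ C)).trace‖
      = ‖(x₃ + x₄) - (x₁ + x₂)‖ := by rw [← hdiff, norm_mul]; norm_num
    _ ≤ ‖x₃ + x₄‖ + ‖x₁ + x₂‖ := norm_sub_le _ _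
    _ = 4 * (R.trace - (R * ((1 ⊗ₖ B) ⊗ₖ C)).trace).re := by
      rw [hre h₃ h₄, hre h₁ h₂, ← Complex.add_re, ← hsum]; simp

theorem general_sufficient_condition_general {d : ℕ}
    (ρ : Matrix (Fin d × Fin d) (Fin d × Fin d) ℂ) (hρ : IsDensityMatrix ρ)
    (R : Matrix ((Fin d × Fin d) × Fin d) ((Fin d × Fin d) × Fin d) ℂ)
    (hRpos : R.PosSemidef) (hRsrc : IsSource122 ρ R)
    (ε : ℝ)
    (W₂ W₂' : Matrix (Fin d) (Fin d) ℂ)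
    (hW₂ : W₂.IsHermitian) (hW₂' : W₂'.IsHermitian)
    (hn₂ : opNorm W₂ ≤ 1) (hn₂' : opNorm W₂' ≤ 1)
    (hcond : (ptr1 R * (W₂ ⊗ₖ W₂')).trace = (ε : ℂ) * (ρ * (W₂ ⊗ₖ W₂')).trace)
    (W₁ : Matrix (Fin d) (Fin d) ℂ) (hW₁ : W₁.IsHermitian) (hn₁ : opNorm W₁ ≤ 1) :
    ‖(ρ * (W₁ ⊗ₖ W₂)).trace - (ρ * (W₁ ⊗ₖ W₂')).trace‖
      ≤ 1 - ε * ((ρ * (W₂ ⊗ₖ W₂')).trace).re := by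
  obtain ⟨-, hptr2, hptr3⟩ := hRsrc
  have h := norm_trace_mul_sub_le_of_posSemidef hRpos
    (posSemidef_one_add_of_opNorm_le_one hW₁ hn₁) (posSemidef_one_sub_of_opNorm_le_one hW₁ hn₁)
    (posSemidef_one_add_of_opNorm_le_one hW₂ hn₂) (posSemidef_one_sub_of_opNorm_le_one hW₂ hn₂)
    (posSemidef_one_add_of_opNorm_le_one hW₂' hn₂')
    (posSemidef_one_sub_of_opNorm_le_one hW₂' hn₂')
  rw [trace_mul_kronecker_one_eq_ptr3, hptr3, trace_mul_kronecker_one_kronecker_eq_ptr2, hptr2,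
    trace_mul_one_kronecker_kronecker_eq_ptr1, hcond, ← trace_ptr3, hptr3, hρ.2] at h
  simpa using h

/-- the general sufficient condition (42) implies the original Bell
inequality (43), in its perfect correlation (ε = -1 sign convention: `1 - ε·tr[...]`)
or anticorrelation form. -/
theorem general_sufficient_condition {d : ℕ}
    (ρ : Matrix (Fin d × Fin d) (Fin d × Fin d) ℂ) (hρ : IsDensityMatrix ρ)
    (R : Matrix ((Fin d × Fin d) × Fin d) ((Fin d × Fin d) × Fin d) ℂ)
    (hRpos : R.PosSemidef) (hRsrc : IsSource122 ρ R)
    (ε : ℝ) (hε : ε = 1 ∨ ε = -1)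
    (W₂ W₂' : Matrix (Fin d) (Fin d) ℂ)
    (hW₂ : W₂.IsHermitian) (hW₂' : W₂'.IsHermitian)
    (hn₂ : opNorm W₂ ≤ 1) (hn₂' : opNorm W₂' ≤ 1)
    (hcond : (ptr1 R * (W₂ ⊗ₖ W₂')).trace = (ε : ℂ) * (ρ * (W₂ ⊗ₖ W₂')).trace)
    (W₁ : Matrix (Fin d) (Fin d) ℂ) (hW₁ : W₁.IsHermitian) (hn₁ : opNorm W₁ ≤ 1) :
    ‖(ρ * (W₁ ⊗ₖ W₂)).trace - (ρ * (W₁ ⊗ₖ W₂')).trace‖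
      ≤ 1 - ε * ((ρ * (W₂ ⊗ₖ W₂')).trace).re :=
  general_sufficient_condition_general ρ hρ R hRpos hRsrc ε W₂ W₂' hW₂ hW₂' hn₂ hn₂' hcond W₁ hW₁
    hn₁

end BellPaper
end
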